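/- arXiv:1110.6014 — 4 statements merged into one kernel-verified Lean document; each statement's English description precedes it below -/
import Mathlib

section
/- Let φ: ℂ → ℝ be a function of class C² such that both sup_{z∈ℂ} |φ(z)| and sup_{z∈ℂ} |−Δφ(z) + φ(z)| are finite. Then sup_{z∈ℂ} |φ(z)| ≤ 4 · sup_{z∈ℂ} |−Δφ(z) + φ(z)|. -/
/-!
Maximum principle for `-Δ + 1`: at a maximum point `z` of `ψ` one has `Δψ z ≤ 0`, hence
`ψ z ≤ -Δψ z + ψ z`. A bounded `ψ` need not attain its supremum, so one maximises
`ψ - δ‖x‖²` instead; at a point `w` this costs `δ (2 dim E + ‖w‖²)`, which vanishes as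
`δ → 0`. Applied to `φ` and `-φ` this gives `sup |φ| ≤ sup |-Δφ + φ|`.
-/

open Filter

/-- The Laplacian `∂²φ/∂x² + ∂²φ/∂y²` of a function `φ : ℂ → ℝ`,
identifying `ℂ` with `ℝ²` via `z = x + iy`. -/
noncomputable def laplacian (φ : ℂ → ℝ) (z : ℂ) : ℝ :=
  iteratedFDeriv ℝ 2 φ z ![1, 1] + iteratedFDeriv ℝ 2 φ z ![Complex.I, Complex.I]

open Set Topology InnerProductSpace
open scoped Laplacian

theorem IsLocalMax.deriv_deriv_nonpos {f : ℝ → ℝ} {a : ℝ} (h : IsLocalMax f a)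
    (hc : ContinuousAt f a) : deriv (deriv f) a ≤ 0 := by
  by_contra! hpos
  have hmin : IsLocalMin f a := isLocalMin_of_deriv_deriv_pos hpos h.deriv_eq_zero hc
  have hconst : f =ᶠ[𝓝 a] fun _ => f a := (h.and hmin).mono fun x hx => le_antisymm hx.1 hx.2
  have hzero : deriv (deriv f) a = 0 := by
    rw [hconst.deriv.deriv_eq]
    simp
  exact hpos.ne' hzero

section

variable {E : Type*} [NormedAddCommGroup E] [NormedSpace ℝ E]

theorem iteratedFDeriv_two_apply_eq_iteratedDeriv_comp_line {F : Type*} [NormedAddCommGroup F]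
    [NormedSpace ℝ F] {f : E → F} (hf : ContDiff ℝ 2 f) (z v : E) :
    iteratedFDeriv ℝ 2 f z ![v, v] = iteratedDeriv 2 (fun t : ℝ => f (z + t • v)) 0 := by
  have hcomp : (fun t : ℝ => f (z + t • v)) =
      (fun y => f (z + y)) ∘ ContinuousLinearMap.toSpanSingleton ℝ v :=
    rfl
  have hf' : ContDiff ℝ 2 (fun y => f (z + y)) := hf.comp (contDiff_const.add contDiff_id)
  rw [iteratedDeriv_eq_iteratedFDeriv, hcomp,
    ContinuousLinearMap.iteratedFDeriv_comp_right _ hf' _ le_rfl, iteratedFDeriv_comp_add_left]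
  simp only [ContinuousMultilinearMap.compContinuousLinearMap_apply, map_zero, add_zero,
    ContinuousLinearMap.toSpanSingleton_apply, one_smul]
  congr 1
  funext i
  fin_cases i <;> rfl

theorem IsLocalMax.iteratedFDeriv_two_nonpos {f : E → ℝ} {z : E} (h : IsLocalMax f z)
    (hf : ContDiff ℝ 2 f) (v : E) : iteratedFDeriv ℝ 2 f z ![v, v] ≤ 0 := by
  have hline : Continuous fun t : ℝ => z + t • v := by fun_prop
  have hmax : IsLocalMax (fun t : ℝ => f (z + t • v)) 0 :=
    IsLocalMax.comp_continuous (g := fun t : ℝ => z + t • v) (by simpa using h)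
      hline.continuousAt
  rw [iteratedFDeriv_two_apply_eq_iteratedDeriv_comp_line hf, iteratedDeriv_succ,
    iteratedDeriv_one]
  exact hmax.deriv_deriv_nonpos (hf.continuous.comp hline).continuousAt

end

section

variable {E : Type*} [NormedAddCommGroup E] [InnerProductSpace ℝ E]

theorem iteratedFDeriv_two_norm_sq_apply (x v w : E) :
    iteratedFDeriv ℝ 2 (fun x : E => ‖x‖ ^ 2) x ![v, w] = 2 * inner ℝ v w := by
  have hD : fderiv ℝ (fun x : E => ‖x‖ ^ 2) =
      fun y => (2 • innerSL ℝ : E →L[ℝ] E →L[ℝ] ℝ) y :=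
    funext fderiv_norm_sq_apply
  rw [iteratedFDeriv_two_apply, hD, ContinuousLinearMap.fderiv]
  simp only [Matrix.cons_val_zero, Matrix.cons_val_one, Matrix.cons_val_fin_one, smul_apply,
    nsmul_eq_mul, Nat.cast_ofNat]
  rfl

variable [FiniteDimensional ℝ E]

theorem laplacian_norm_sq (x : E) : Δ (fun x : E => ‖x‖ ^ 2) x = 2 * Module.finrank ℝ E := by
  simp [laplacian_eq_iteratedFDeriv_stdOrthonormalBasis, iteratedFDeriv_two_norm_sq_apply, mul_comm]

theorem IsLocalMax.laplacian_nonpos {f : E → ℝ} {z : E} (h : IsLocalMax f z)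
    (hf : ContDiff ℝ 2 f) : Δ f z ≤ 0 := by
  rw [laplacian_eq_iteratedFDeriv_stdOrthonormalBasis]
  exact Finset.sum_nonpos fun i _ => h.iteratedFDeriv_two_nonpos hf _

end

section

variable {E : Type*} [NormedAddCommGroup E] [InnerProductSpace ℝ E] [FiniteDimensional ℝ E]

theorem le_of_neg_laplacian_add_le {f : E → ℝ} {K : ℝ} (hf : ContDiff ℝ 2 f)
    (hbdd : BddAbove (range f)) (hK : ∀ x, -Δ f x + f x ≤ K) (w : E) : f w ≤ K := by
  obtain ⟨C, hC⟩ := hbdd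
  have hC' : ∀ x, f x ≤ C := fun x => hC ⟨x, rfl⟩
  have hq : ContDiff ℝ 2 fun x : E => ‖x‖ ^ 2 := contDiff_norm_sq ℝ
  have hpert : ∀ δ > 0, f w ≤ K + δ * (2 * Module.finrank ℝ E + ‖w‖ ^ 2) := by
    intro δ hδ
    set g : E → ℝ := f - δ • fun x => ‖x‖ ^ 2
    have hg : ContDiff ℝ 2 g := hf.sub (hq.const_smul δ)
    have hlim : Tendsto g (cocompact E) atBot := by
      have : Tendsto (fun x : E => C - δ * ‖x‖ ^ 2) (cocompact E) atBot :=
        tendsto_atBot_add_const_left _ C <| tendsto_neg_atTop_atBot.comp <|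
          ((tendsto_pow_atTop two_ne_zero).comp tendsto_norm_cocompact_atTop).const_mul_atTop hδ
      refine tendsto_atBot_mono (fun x => ?_) this
      simp [g, hC' x]
    obtain ⟨z, hz⟩ := hg.continuous.exists_forall_ge hlim
    have hΔg : Δ g z = Δ f z - δ * (2 * Module.finrank ℝ E) := by
      rw [hf.contDiffAt.laplacian_sub (f₂ := δ • fun x : E => ‖x‖ ^ 2)
          (hq.const_smul δ).contDiffAt, laplacian_smul δ hq.contDiffAt, smul_eq_mul,
        laplacian_norm_sq]
    have hΔ : Δ g z ≤ 0 := ((isMaxOn_univ_iff.2 hz).isLocalMax univ_mem).laplacian_nonpos hg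
    have hgw : f w - δ * ‖w‖ ^ 2 ≤ f z - δ * ‖z‖ ^ 2 := hz w
    nlinarith [hK z, sq_nonneg ‖z‖]
  refine le_of_forall_pos_le_add fun ε hε => ?_
  set c : ℝ := 2 * Module.finrank ℝ E + ‖w‖ ^ 2
  have hc : 0 ≤ c := by positivity
  calc f w ≤ K + ε / (c + 1) * c := hpert _ (by positivity)
    _ ≤ K + ε := by
      gcongr
      rw [div_mul_eq_mul_div, div_le_iff₀ (by positivity)]
      nlinarith

theorem abs_le_of_abs_neg_laplacian_add_le {f : E → ℝ} {K : ℝ} (hf : ContDiff ℝ 2 f)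
    (hbdd : BddAbove (range fun x => |f x|)) (hK : ∀ x, |-Δ f x + f x| ≤ K) (w : E) :
    |f w| ≤ K := by
  obtain ⟨C, hC⟩ := hbdd
  have hC' : ∀ x, |f x| ≤ C := fun x => hC ⟨x, rfl⟩
  refine abs_le.2 ⟨neg_le.1 ?_, ?_⟩
  · refine le_of_neg_laplacian_add_le (f := -f) hf.neg ⟨C, ?_⟩ (fun x => ?_) w
    · rintro _ ⟨x, rfl⟩
      exact (neg_le_abs _).trans (hC' x)
    · rw [laplacian_neg, Pi.neg_apply, Pi.neg_apply]
      linarith [(neg_le_abs _).trans (hK x)]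
  · refine le_of_neg_laplacian_add_le hf ⟨C, ?_⟩ (fun x => (le_abs_self _).trans (hK x)) w
    rintro _ ⟨x, rfl⟩
    exact (le_abs_self _).trans (hC' x)

end

theorem laplacian_eq_innerProductSpace_laplacian : laplacian = Δ := by
  funext φ
  exact (laplacian_eq_iteratedFDeriv_complexPlane φ).symm

theorem stmt_0 (φ : ℂ → ℝ) (hφ : ContDiff ℝ 2 φ)
    (hb : BddAbove (Set.range fun z : ℂ => |φ z|))
    (hb' : BddAbove (Set.range fun z : ℂ => |-laplacian φ z + φ z|)) :
    (⨆ z : ℂ, |φ z|) ≤ 4 * ⨆ z : ℂ, |-laplacian φ z + φ z| := by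
  set K := ⨆ z : ℂ, |-laplacian φ z + φ z|
  have hK : ∀ z, |-laplacian φ z + φ z| ≤ K := le_ciSup hb'
  rw [laplacian_eq_innerProductSpace_laplacian] at hK
  have hφK : ∀ z, |φ z| ≤ K := abs_le_of_abs_neg_laplacian_add_le hφ hb hK
  calc (⨆ z : ℂ, |φ z|) ≤ K := ciSup_le hφK
    _ ≤ 4 * K := by linarith [(abs_nonneg _).trans (hφK 0)]
end

section
/- Let u: ℂ → [0,1] be a Lebesgue measurable function. Then the limit lim_{R→∞} (1/(πR²)) · sup_{a∈ℂ} ∫_{D_R(a)} u(z) dxdy exists (as a limit of the function of the real variable R as R → ∞). -/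
/-!
Write `M(r) = sup_a ∫_{D_r(a)} u`. Integrating `u(z)` times the indicator of `|z - b| ≤ r` over
`z ∈ D_s(a)`, `b ∈ D_{s+r}(a)` in both orders (every disc `D_r(z)` lies in `D_{s+r}(a)`) gives
`|D_r| · M(s) ≤ |D_{s+r}| · M(r)`. So the density `A(R) = M(R) / |D_R|` satisfies
`A(S) ≤ ((S + r) / S)^d · A(r)` in dimension `d`, whence `limsup A ≤ A(r)` for every `r > 0`
and `A` converges to `inf_{r > 0} A(r)`. Only translation invariance and scaling of the measure
enter, so the argument works for Haar measure on any finite-dimensional real normed space.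
-/

open Filter MeasureTheory Set Metric Module Topology Measure
open scoped ENNReal

theorem tendsto_iInf_of_le_mul {f : ℝ → ℝ} {c : ℝ → ℝ → ℝ} (hf : ∀ r, 0 < r → 0 ≤ f r)
    (hc : ∀ r, 0 < r → Tendsto (c r) atTop (𝓝 1))
    (hle : ∀ r, 0 < r → ∀ᶠ S in atTop, f S ≤ c r S * f r) :
    Tendsto f atTop (𝓝 (⨅ r : Ioi (0 : ℝ), f r)) := by
  have hbdd : BddBelow (range fun r : Ioi (0 : ℝ) => f r) :=
    ⟨0, forall_mem_range.2 fun r => hf r r.2⟩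
  refine tendsto_order.2 ⟨fun a ha => ?_, fun b hb => ?_⟩
  · filter_upwards [eventually_gt_atTop 0] with S hS
    exact ha.trans_le (ciInf_le hbdd ⟨S, hS⟩)
  · obtain ⟨r, hr⟩ := exists_lt_of_ciInf_lt hb
    have hlim : Tendsto (fun S => c r S * f r) atTop (𝓝 (f r)) := by
      simpa using (hc r r.2).mul_const (f r)
    filter_upwards [hle r r.2, hlim.eventually (gt_mem_nhds hr)] with S h1 h2
    exact h1.trans_lt h2

section

variable {E : Type*} [NormedAddCommGroup E] [NormedSpace ℝ E] [FiniteDimensional ℝ E]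
  [MeasurableSpace E] [BorelSpace E] (μ : Measure E) [μ.IsAddHaarMeasure]

theorem mul_setLIntegral_closedBall_le {v : E → ℝ≥0∞} (hv : Measurable v) {r : ℝ} {M : ℝ≥0∞}
    (hM : ∀ b, ∫⁻ z in closedBall b r, v z ∂μ ≤ M) (a : E) (s : ℝ) :
    μ (closedBall 0 r) * ∫⁻ z in closedBall a s, v z ∂μ ≤ μ (closedBall 0 (s + r)) * M := by
  set F : E → E → ℝ≥0∞ := fun z b => (closedBall b r).indicator v z
  have hF : Measurable (Function.uncurry F) :=
    (hv.comp measurable_fst).indicator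
      (measurableSet_le (by fun_prop) measurable_const :
        MeasurableSet {p : E × E | dist p.1 p.2 ≤ r})
  have hinner : ∀ z ∈ closedBall a s,
      μ (closedBall 0 r) * v z = ∫⁻ b in closedBall a (s + r), F z b ∂μ := by
    intro z hz
    have hsub : closedBall z r ⊆ closedBall a (s + r) :=
      closedBall_subset_closedBall' (by linarith [mem_closedBall.1 hz])
    have hFz : F z = (closedBall z r).indicator fun _ => v z := by
      ext b
      classical
      simp only [F, indicator_apply, mem_closedBall_comm]
    rw [hFz, lintegral_indicator_const measurableSet_closedBall,
      Measure.restrict_apply measurableSet_closedBall, inter_eq_self_of_subset_left hsub,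
      addHaar_closedBall_center μ z, mul_comm]
  calc μ (closedBall 0 r) * ∫⁻ z in closedBall a s, v z ∂μ
      = ∫⁻ z in closedBall a s, ∫⁻ b in closedBall a (s + r), F z b ∂μ ∂μ := by
        rw [← lintegral_const_mul _ hv]
        exact setLIntegral_congr_fun measurableSet_closedBall hinner
    _ ≤ ∫⁻ z, ∫⁻ b in closedBall a (s + r), F z b ∂μ ∂μ := setLIntegral_le_lintegral _ _
    _ = ∫⁻ b in closedBall a (s + r), ∫⁻ z, F z b ∂μ ∂μ :=
        lintegral_lintegral_swap hF.aemeasurable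
    _ ≤ ∫⁻ _ in closedBall a (s + r), M ∂μ := by
        gcongr with b
        exact (lintegral_indicator measurableSet_closedBall v).trans_le (hM b)
    _ = μ (closedBall 0 (s + r)) * M := by
        rw [setLIntegral_const, addHaar_closedBall_center, mul_comm]

end

noncomputable def supBallIntegral {X : Type*} [PseudoMetricSpace X] [MeasurableSpace X]
    (μ : Measure X) (u : X → ℝ) (r : ℝ) : ℝ :=
  ⨆ a : X, ∫ z in closedBall a r, u z ∂μ

theorem supBallIntegral_nonneg {X : Type*} [PseudoMetricSpace X] [MeasurableSpace X]
    [OpensMeasurableSpace X] {μ : Measure X} {u : X → ℝ} (hu : ∀ z, 0 ≤ u z) (r : ℝ) :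
    0 ≤ supBallIntegral μ u r :=
  Real.iSup_nonneg fun _ => setIntegral_nonneg measurableSet_closedBall fun z _ => hu z

theorem norm_le_one_of_mem_Icc {X : Type*} {u : X → ℝ} (hu01 : ∀ z, u z ∈ Icc (0 : ℝ) 1)
    (z : X) : ‖u z‖ ≤ 1 := by
  rw [Real.norm_eq_abs, abs_of_nonneg (hu01 z).1]
  exact (hu01 z).2

section

variable {E : Type*} [NormedAddCommGroup E] [NormedSpace ℝ E] [FiniteDimensional ℝ E]
  [MeasurableSpace E] [BorelSpace E] {μ : Measure E} [μ.IsAddHaarMeasure]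
  {u : E → ℝ} (hu01 : ∀ z, u z ∈ Icc (0 : ℝ) 1)
include hu01

theorem setIntegral_closedBall_le_measureReal (a : E) (r : ℝ) :
    ∫ z in closedBall a r, u z ∂μ ≤ μ.real (closedBall 0 r) := by
  have h := norm_setIntegral_le_of_norm_le_const (μ := μ) (f := u) (s := closedBall a r)
    measure_closedBall_lt_top fun z _ => norm_le_one_of_mem_Icc hu01 z
  rw [one_mul, addHaar_real_closedBall_center] at h
  exact (le_abs_self _).trans h

theorem setIntegral_closedBall_le_supBallIntegral (a : E) (r : ℝ) :
    ∫ z in closedBall a r, u z ∂μ ≤ supBallIntegral μ u r :=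
  le_ciSup ⟨_, forall_mem_range.2 fun b => setIntegral_closedBall_le_measureReal hu01 b r⟩ a

theorem measureReal_closedBall_mul_supBallIntegral_le (hu : Measurable u) (r s : ℝ) :
    μ.real (closedBall 0 r) * supBallIntegral μ u s ≤
      μ.real (closedBall 0 (s + r)) * supBallIntegral μ u r := by
  have hint a ρ : ENNReal.ofReal (∫ z in closedBall a ρ, u z ∂μ) =
      ∫⁻ z in closedBall a ρ, ENNReal.ofReal (u z) ∂μ :=
    ofReal_integral_eq_lintegral_ofReal
      (IntegrableOn.of_bound measure_closedBall_lt_top hu.aestronglyMeasurable 1 <|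
        .of_forall (norm_le_one_of_mem_Icc hu01))
      (.of_forall fun z => (hu01 z).1)
  rw [supBallIntegral, Real.mul_iSup_of_nonneg measureReal_nonneg]
  refine ciSup_le fun a => ?_
  have key := mul_setLIntegral_closedBall_le μ hu.ennreal_ofReal
    (M := ENNReal.ofReal (supBallIntegral μ u r))
    (fun b => (hint b r).symm.trans_le <|
      ENNReal.ofReal_le_ofReal (setIntegral_closedBall_le_supBallIntegral hu01 b r)) a s
  rw [← hint] at key
  have h := ENNReal.toReal_mono
    (ENNReal.mul_ne_top measure_closedBall_lt_top.ne ENNReal.ofReal_ne_top) key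
  rwa [ENNReal.toReal_mul, ENNReal.toReal_mul,
    ENNReal.toReal_ofReal (supBallIntegral_nonneg (fun z => (hu01 z).1) r),
    ENNReal.toReal_ofReal (setIntegral_nonneg measurableSet_closedBall fun z _ => (hu01 z).1)] at h

theorem supBallIntegral_div_measureReal_le (hu : Measurable u) {r S : ℝ} (hr : 0 < r)
    (hS : 0 < S) :
    supBallIntegral μ u S / μ.real (closedBall 0 S) ≤
      ((S + r) / S) ^ finrank ℝ E * (supBallIntegral μ u r / μ.real (closedBall 0 r)) := by
  have hball ρ (hρ : 0 < ρ) := addHaar_real_closedBall' μ (0 : E) hρ.le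
  have hunit : 0 < μ.real (closedBall (0 : E) 1) :=
    ENNReal.toReal_pos (measure_closedBall_pos μ 0 one_pos).ne' measure_closedBall_lt_top.ne
  have key := measureReal_closedBall_mul_supBallIntegral_le (μ := μ) hu01 hu r S
  rw [hball r hr, hball (S + r) (by positivity)] at key
  have hrhs : ((S + r) / S) ^ finrank ℝ E * (supBallIntegral μ u r / μ.real (closedBall 0 r)) =
      (S + r) ^ finrank ℝ E * μ.real (closedBall (0 : E) 1) * supBallIntegral μ u r /
        (r ^ finrank ℝ E * μ.real (closedBall (0 : E) 1)) / μ.real (closedBall 0 S) := by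
    rw [hball r hr, hball S hS, div_pow]
    field_simp
  rw [hrhs]
  gcongr
  rw [le_div_iff₀ (by positivity)]
  linarith

theorem tendsto_supBallIntegral_div_measureReal (hu : Measurable u) :
    Tendsto (fun R => supBallIntegral μ u R / μ.real (closedBall 0 R)) atTop
      (𝓝 (⨅ r : Ioi (0 : ℝ), supBallIntegral μ u r / μ.real (closedBall 0 r))) := by
  refine tendsto_iInf_of_le_mul (c := fun r S => ((S + r) / S) ^ finrank ℝ E)
    (fun r _ => div_nonneg (supBallIntegral_nonneg (fun z => (hu01 z).1) r) measureReal_nonneg)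
    (fun r _ => ?_) (fun r hr => ?_)
  · have h : Tendsto (fun S : ℝ => (1 + r / S) ^ finrank ℝ E) atTop (𝓝 1) := by
      simpa using ((tendsto_const_nhds (x := (1 : ℝ))).add
        (tendsto_const_nhds.div_atTop tendsto_id)).pow (finrank ℝ E)
    refine h.congr' ?_
    filter_upwards [eventually_gt_atTop 0] with S hS
    rw [add_div, div_self hS.ne']
  · filter_upwards [eventually_gt_atTop 0] with S hS
    exact supBallIntegral_div_measureReal_le hu01 hu hr hS

end

theorem Complex.volume_real_closedBall (a : ℂ) {r : ℝ} (hr : 0 ≤ r) :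
    volume.real (closedBall a r) = Real.pi * r ^ 2 := by
  simp [measureReal_def, hr, mul_comm]

theorem stmt_5 (u : ℂ → ℝ) (hu : Measurable u) (hu01 : ∀ z : ℂ, u z ∈ Set.Icc (0:ℝ) 1) :
    ∃ L : ℝ,
      Tendsto
        (fun R : ℝ =>
          (1 / (Real.pi * R ^ 2)) * ⨆ a : ℂ, ∫ z in Metric.closedBall a R, u z)
        atTop (nhds L) := by
  refine ⟨_, (tendsto_supBallIntegral_div_measureReal (μ := volume) hu01 hu).congr' ?_⟩
  filter_upwards [eventually_ge_atTop 0] with R hR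
  rw [Complex.volume_real_closedBall 0 hR, one_div, div_eq_inv_mul, supBallIntegral]
end

section
/- Let u: ℂ → [0,1] be a Lebesgue measurable function, and let ρ(u) := lim_{R→∞} (1/(πR²)) · sup_{a∈ℂ} ∫_{D_R(a)} u dxdy (this limit exists). Define T(r) := ∫₁^r (∫_{D_t(0)} u dxdy) dt/t for r ≥ 1. Then limsup_{r→∞} (2/(πr²)) T(r) ≤ limsup_{R→∞} (1/(πR²)) ∫_{D_R(0)} u dxdy ≤ ρ(u). -/
/-!
Write `A t` for the mass of `u` on the disc of radius `t` about `0`. If the normalized mass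
`A t / (π t²)` is eventually below `M`, then `A t / t ≤ π M t` for large `t`, so `T r` grows at
most like `π M r² / 2` plus a constant, which gives the first inequality. The second one holds
because the disc about `0` is one of the discs in the supremum defining `ρ`.
-/

open Filter MeasureTheory Metric Set

lemma limsup_two_div_mul_sq_mul_integral_le {f : ℝ → ℝ} {a c M : ℝ} (hc : 0 < c)
    (hf : ∀ r, a ≤ r → IntervalIntegrable f volume a r)
    (hfM : ∀ᶠ t in atTop, f t ≤ c * M * t)
    (hcobdd : IsCoboundedUnder (· ≤ ·) atTop fun r => 2 / (c * r ^ 2) * ∫ t in a..r, f t) :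
    limsup (fun r => 2 / (c * r ^ 2) * ∫ t in a..r, f t) atTop ≤ M := by
  obtain ⟨s, hs⟩ := eventually_atTop.1 (hfM.and (eventually_ge_atTop a))
  have has : a ≤ s := (hs s le_rfl).2
  set C := ∫ t in a..s, f t
  have hbound : ∀ r, s ≤ r → ∫ t in a..r, f t ≤ C + c * M * (r ^ 2 - s ^ 2) / 2 := by
    intro r hr
    have hsr : IntervalIntegrable f volume s r := (hf s has).symm.trans (hf r (has.trans hr))
    have htail : ∫ t in s..r, f t ≤ ∫ t in s..r, c * M * t :=
      intervalIntegral.integral_mono_on hr hsr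
        ((continuous_const_mul _).intervalIntegrable s r) fun t ht => (hs t ht.1).1
    rw [intervalIntegral.integral_const_mul, integral_id] at htail
    rw [← intervalIntegral.integral_add_adjacent_intervals (hf s has) hsr]
    linarith
  have htend : Tendsto (fun r : ℝ => M + (2 * C - c * M * s ^ 2) / (c * r ^ 2)) atTop
      (nhds M) := by
    simpa using tendsto_const_nhds.add (tendsto_const_nhds.div_atTop
      ((tendsto_pow_atTop two_ne_zero).const_mul_atTop hc))
  refine (limsup_le_limsup ?_ hcobdd htend.isBoundedUnder_le).trans_eq htend.limsup_eq
  filter_upwards [eventually_ge_atTop s, eventually_gt_atTop 0] with r hrs hr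
  calc 2 / (c * r ^ 2) * ∫ t in a..r, f t
      ≤ 2 / (c * r ^ 2) * (C + c * M * (r ^ 2 - s ^ 2) / 2) := by
        gcongr
        exact hbound r hrs
    _ = M + (2 * C - c * M * s ^ 2) / (c * r ^ 2) := by
        field_simp
        ring

lemma limsup_two_div_mul_sq_mul_integral_div_le {A : ℝ → ℝ} {a c : ℝ} (hc : 0 < c)
    (hA : ∀ r, a ≤ r → IntervalIntegrable (fun t => A t / t) volume a r)
    (hbdd : IsBoundedUnder (· ≤ ·) atTop fun R => 1 / (c * R ^ 2) * A R)
    (hcobdd : IsCoboundedUnder (· ≤ ·) atTop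
      fun r => 2 / (c * r ^ 2) * ∫ t in a..r, A t / t) :
    limsup (fun r => 2 / (c * r ^ 2) * ∫ t in a..r, A t / t) atTop ≤
      limsup (fun R => 1 / (c * R ^ 2) * A R) atTop := by
  set L := limsup (fun R => 1 / (c * R ^ 2) * A R) atTop
  refine le_of_forall_pos_le_add fun ε hε => limsup_two_div_mul_sq_mul_integral_le hc hA ?_ hcobdd
  filter_upwards [eventually_lt_of_limsup_lt (lt_add_of_pos_right L hε) hbdd,
    eventually_gt_atTop 0] with t hLt ht
  rw [div_le_iff₀ ht]
  calc A t = c * t ^ 2 * (1 / (c * t ^ 2) * A t) := by field_simp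
    _ ≤ c * t ^ 2 * (L + ε) := by gcongr
    _ = c * (L + ε) * t * t := by ring

lemma Monotone.intervalIntegrable_div {A : ℝ → ℝ} (hA : Monotone A) {a b : ℝ} (ha : 0 < a)
    (hb : 0 < b) : IntervalIntegrable (fun t => A t / t) volume a b := by
  have hinv : ContinuousOn (fun t : ℝ => t⁻¹) (uIcc a b) :=
    continuousOn_inv₀.mono fun t ht => (lt_min ha hb).trans_le ht.1 |>.ne'
  simpa [div_eq_mul_inv] using hA.intervalIntegrable.mul_continuousOn hinv

lemma integrableOn_closedBall_of_mem_Icc {u : ℂ → ℝ} (hu : Measurable u)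
    (hu01 : ∀ z, u z ∈ Icc (0 : ℝ) 1) (a : ℂ) (t : ℝ) : IntegrableOn u (closedBall a t) := by
  refine Measure.integrableOn_of_bounded (M := 1) measure_closedBall_lt_top.ne
    hu.aestronglyMeasurable (Eventually.of_forall fun z => ?_)
  rw [Real.norm_eq_abs, abs_le]
  exact ⟨(neg_nonpos.2 zero_le_one).trans (hu01 z).1, (hu01 z).2⟩

lemma setIntegral_closedBall_le_pi_mul_sq {u : ℂ → ℝ} (hu : Measurable u)
    (hu01 : ∀ z, u z ∈ Icc (0 : ℝ) 1) (a : ℂ) {t : ℝ} (ht : 0 ≤ t) :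
    ∫ z in closedBall a t, u z ≤ Real.pi * t ^ 2 := by
  calc ∫ z in closedBall a t, u z ≤ ∫ _ in closedBall a t, (1 : ℝ) :=
        setIntegral_mono_on (integrableOn_closedBall_of_mem_Icc hu hu01 a t)
          (integrableOn_const measure_closedBall_lt_top.ne) measurableSet_closedBall
          fun z _ => (hu01 z).2
    _ = Real.pi * t ^ 2 := by
        rw [setIntegral_const, smul_eq_mul, mul_one, measureReal_def, Complex.volume_closedBall,
          ENNReal.toReal_mul, ENNReal.toReal_pow, ENNReal.toReal_ofReal ht]
        simp [mul_comm]

lemma mul_setIntegral_closedBall_mem_Icc {u : ℂ → ℝ} (hu : Measurable u)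
    (hu01 : ∀ z, u z ∈ Icc (0 : ℝ) 1) (a : ℂ) {R : ℝ} (hR : 0 < R) :
    1 / (Real.pi * R ^ 2) * ∫ z in closedBall a R, u z ∈ Icc (0 : ℝ) 1 := by
  have hpos : 0 < Real.pi * R ^ 2 := by positivity
  rw [one_div_mul_eq_div, mem_Icc, le_div_iff₀ hpos, div_le_one hpos, zero_mul]
  exact ⟨setIntegral_nonneg measurableSet_closedBall fun z _ => (hu01 z).1,
    setIntegral_closedBall_le_pi_mul_sq hu hu01 a hR.le⟩

lemma monotone_setIntegral_closedBall {u : ℂ → ℝ} (hu : Measurable u)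
    (hu01 : ∀ z, u z ∈ Icc (0 : ℝ) 1) (a : ℂ) :
    Monotone fun t => ∫ z in closedBall a t, u z := fun _ t hst =>
  setIntegral_mono_set (integrableOn_closedBall_of_mem_Icc hu hu01 a t)
    (Eventually.of_forall fun z => (hu01 z).1)
    (closedBall_subset_closedBall hst).eventuallyLE

theorem stmt_7 (u : ℂ → ℝ) (hu : Measurable u) (hu01 : ∀ z : ℂ, u z ∈ Set.Icc (0:ℝ) 1)
    (ρ : ℝ)
    (hρ : Tendsto
      (fun R : ℝ =>
        (1 / (Real.pi * R ^ 2)) * ⨆ a : ℂ, ∫ z in Metric.closedBall a R, u z)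
      atTop (nhds ρ))
    (T : ℝ → ℝ)
    (hT : ∀ r : ℝ, 1 ≤ r →
      T r = ∫ t in (1:ℝ)..r, (∫ z in Metric.closedBall (0:ℂ) t, u z) / t) :
    limsup (fun r : ℝ => (2 / (Real.pi * r ^ 2)) * T r) atTop ≤
      limsup (fun R : ℝ =>
        (1 / (Real.pi * R ^ 2)) * ∫ z in Metric.closedBall (0:ℂ) R, u z) atTop ∧
    limsup (fun R : ℝ =>
        (1 / (Real.pi * R ^ 2)) * ∫ z in Metric.closedBall (0:ℂ) R, u z) atTop ≤ ρ := by
  set A : ℝ → ℝ := fun t => ∫ z in closedBall (0 : ℂ) t, u z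
  have hmean : ∀ᶠ R in atTop, 1 / (Real.pi * R ^ 2) * A R ∈ Icc (0 : ℝ) 1 :=
    (eventually_gt_atTop 0).mono fun R hR => mul_setIntegral_closedBall_mem_Icc hu hu01 0 hR
  have hmono : Monotone A := monotone_setIntegral_closedBall hu hu01 0
  have hT_nonneg : ∀ᶠ r in atTop, 0 ≤ 2 / (Real.pi * r ^ 2) * ∫ t in (1 : ℝ)..r, A t / t := by
    filter_upwards [eventually_ge_atTop 1] with r hr
    refine mul_nonneg (by positivity) (intervalIntegral.integral_nonneg hr fun t ht => ?_)
    exact div_nonneg (setIntegral_nonneg measurableSet_closedBall fun z _ => (hu01 z).1)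
      (zero_le_one.trans ht.1)
  have hmean_le_sup : ∀ᶠ R in atTop, 1 / (Real.pi * R ^ 2) * A R ≤
      1 / (Real.pi * R ^ 2) * ⨆ a : ℂ, ∫ z in closedBall a R, u z := by
    filter_upwards [eventually_gt_atTop 0] with R hR
    have hbdd : BddAbove (range fun a : ℂ => ∫ z in closedBall a R, u z) :=
      ⟨_, forall_mem_range.2 fun a => setIntegral_closedBall_le_pi_mul_sq hu hu01 a hR.le⟩
    gcongr
    exact le_ciSup hbdd 0
  constructor
  · calc limsup (fun r : ℝ => 2 / (Real.pi * r ^ 2) * T r) atTop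
        = limsup (fun r : ℝ => 2 / (Real.pi * r ^ 2) * ∫ t in (1 : ℝ)..r, A t / t) atTop :=
          limsup_congr <| (eventually_ge_atTop 1).mono fun r hr => by rw [hT r hr]
      _ ≤ limsup (fun R : ℝ => 1 / (Real.pi * R ^ 2) * A R) atTop :=
          limsup_two_div_mul_sq_mul_integral_div_le Real.pi_pos
            (fun r hr => hmono.intervalIntegrable_div one_pos (one_pos.trans_le hr))
            (isBoundedUnder_of_eventually_le (hmean.mono fun R h => h.2))
            (isCoboundedUnder_le_of_eventually_le atTop hT_nonneg)
  · exact (limsup_le_limsup hmean_le_sup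
      (isCoboundedUnder_le_of_eventually_le atTop (hmean.mono fun R h => h.1))
      hρ.isBoundedUnder_le).trans_eq hρ.limsup_eq
end

section
/- Let N ≥ 1, and let a > 0 and R₀ ≥ 1 be real numbers with Na/R₀³ ≤ 2 and Na²/R₀⁶ ≤ 1/2. Let f₁, …, f_N: ℂ → ℂ be holomorphic functions such that σ(f)(z) ≤ 1 for all z ∈ ℂ. Define g_i(z) := f_i(z) + a/z³ on ℂ \ {0}. Set K_a := 4a√(N+1)(√π + 3a) + 3a, K_a' := 4a√(N+1)(√π + 3a√2 + 2a√π) + 3a√2 + 2a√π, and K := sqrt(N·K_a² + (N(N−1)/2)·(K_a')²)/√π. Then for every z ∈ ℂ with |z| ≥ R₀, one has |σ(g)(z) − σ(f)(z)| ≤ K/|z|³. -/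
open Filter

/-- The spherical derivative of the holomorphic curve `[1 : f₁ : ⋯ : f_N]`. -/
noncomputable def sphericalDeriv {N : ℕ} (f : Fin N → ℂ → ℂ) (z : ℂ) : ℝ :=
  Real.sqrt (∑ i, ‖deriv (f i) z‖ ^ 2 +
      ∑ p ∈ Finset.univ.filter (fun p : Fin N × Fin N => p.1 < p.2),
        ‖deriv (f p.1) z * f p.2 z - f p.1 z * deriv (f p.2) z‖ ^ 2) /
    (Real.sqrt Real.pi * (1 + ∑ i, ‖f i z‖ ^ 2))

/-!
At a point, `√π σ(h)` is the Euclidean norm of the vector with entries `|h_i'| / (1 + |h|²)` and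
`|h_i' h_j - h_i h_j'| / (1 + |h|²)`, so `|σ(g) - σ(f)|` is bounded by the norm of the difference
of these vectors, divided by `√π`. With `ε = a |z|⁻³ ≤ a` we have `|g_i - f_i| = ε` and
`|g_i' - f_i'| ≤ 3ε`. The Brody condition bounds `|f_i'|` and the Wronskians of `f` by
`√π (1 + |f|²)`, so every numerator moves by `O(ε) (1 + |f|²)`; by Cauchy–Schwarz and `N ε² ≤ 1`
the denominator moves by at most `2 √N ε (1 + |g|²)`. Comparing the quotients through
`x/c - x'/c' = (x - x')/c' + (x/c') (c' - c)/c` bounds each entry by `Ka |z|⁻³` or `Ka' |z|⁻³`.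
-/

open Finset Real

lemma abs_sqrt_sum_sq_sub_sqrt_sum_sq_le {ι : Type*} [Fintype ι] (x y : ι → ℝ) :
    |√(∑ i, x i ^ 2) - √(∑ i, y i ^ 2)| ≤ √(∑ i, (x i - y i) ^ 2) := by
  have hnorm (v : ι → ℝ) : ‖WithLp.toLp 2 v‖ = √(∑ i, v i ^ 2) := by
    simp [EuclideanSpace.norm_eq]
  simpa only [hnorm, ← WithLp.toLp_sub, Pi.sub_apply] using
    abs_norm_sub_norm_le (WithLp.toLp 2 x) (WithLp.toLp 2 y)

lemma abs_sq_sub_sq_le {x y ε : ℝ} (hx : 0 ≤ x) (h : |x - y| ≤ ε) :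
    |x ^ 2 - y ^ 2| ≤ ε * (2 * x + ε) := by
  rw [abs_le] at h ⊢
  constructor <;> nlinarith

lemma abs_sum_sq_sub_sum_sq_le {ι : Type*} [Fintype ι] {x y : ι → ℝ} {ε : ℝ}
    (hx : ∀ i, 0 ≤ x i) (h : ∀ i, |x i - y i| ≤ ε) (hε : Fintype.card ι * ε ^ 2 ≤ 1) :
    |∑ i, x i ^ 2 - ∑ i, y i ^ 2| ≤ 2 * √(Fintype.card ι) * ε * (1 + ∑ i, x i ^ 2) := by
  rcases isEmpty_or_nonempty ι with hι | ⟨⟨i₀⟩⟩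
  · simp
  set n : ℝ := ((Fintype.card ι : ℕ) : ℝ)
  set S := ∑ i, x i ^ 2
  have hε0 : 0 ≤ ε := (abs_nonneg _).trans (h i₀)
  have hsum : |S - ∑ i, y i ^ 2| ≤ 2 * ε * ∑ i, x i + n * ε ^ 2 :=
    calc |S - ∑ i, y i ^ 2| ≤ ∑ i, |x i ^ 2 - y i ^ 2| := by
          rw [← sum_sub_distrib]; exact abs_sum_le_sum_abs _ _
      _ ≤ ∑ i, ε * (2 * x i + ε) := sum_le_sum fun i _ => abs_sq_sub_sq_le (hx i) (h i)
      _ = 2 * ε * ∑ i, x i + n * ε ^ 2 := by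
          simp only [mul_add, sum_add_distrib, ← mul_sum, sum_const, card_univ, nsmul_eq_mul, n]
          ring
  have hS : 0 ≤ S := by positivity
  have hn : 0 ≤ √n := sqrt_nonneg n
  have hCS : 2 * ∑ i, x i ≤ √n * (1 + S) := by
    have hsq : (∑ i, x i) ^ 2 ≤ n * S := by
      simpa only [card_univ] using sq_sum_le_card_mul_sum_sq (s := univ) (f := x)
    have hle : ∑ i, x i ≤ √n * √S := by
      rw [← sqrt_mul (Nat.cast_nonneg _)]
      exact le_sqrt_of_sq_le hsq
    nlinarith [sq_nonneg (√S - 1), sq_sqrt hS, sqrt_nonneg S]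
  have hnε : n * ε ^ 2 ≤ √n * ε := by
    have hsq : (√n * ε) ^ 2 = n * ε ^ 2 := by rw [mul_pow, sq_sqrt (Nat.cast_nonneg _)]
    have hq : √n * ε ≤ 1 := by nlinarith [mul_nonneg hn hε0]
    nlinarith [mul_nonneg hn hε0]
  nlinarith [mul_le_mul_of_nonneg_left hCS hε0, mul_nonneg (mul_nonneg hn hε0) hS]

lemma abs_div_sub_div_le {xg xf cg cf d e M : ℝ} (hcf : 0 < cf) (hcg : 0 < cg)
    (hxg0 : 0 ≤ xg) (hd : |xg - xf| ≤ d * cf) (hxg : xg ≤ e * cf) (hc : |cf - cg| ≤ M * cg) :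
    |xg / cg - xf / cf| ≤ d + e * M := by
  have hsplit : xg / cg - xf / cf = (xg - xf) / cf + xg / cf * ((cf - cg) / cg) := by
    field_simp
    ring
  have h₁ : |(xg - xf) / cf| ≤ d := by
    rwa [abs_div, abs_of_pos hcf, div_le_iff₀ hcf]
  have h₂ : |xg / cf| ≤ e := by
    rwa [abs_of_nonneg (by positivity), div_le_iff₀ hcf]
  have h₃ : |(cf - cg) / cg| ≤ M := by
    rwa [abs_div, abs_of_pos hcg, div_le_iff₀ hcg]
  calc |xg / cg - xf / cf| ≤ |(xg - xf) / cf| + |xg / cf| * |(cf - cg) / cg| := by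
        rw [hsplit, ← abs_mul]; exact abs_add_le _ _
    _ ≤ d + e * M := by gcongr; exact (abs_nonneg _).trans h₂

noncomputable section

variable {N : ℕ}

abbrev ordPairs (N : ℕ) : Finset (Fin N × Fin N) := univ.filter fun p => p.1 < p.2

lemma card_ordPairs (N : ℕ) : (#(ordPairs N) : ℝ) = N * (N - 1) / 2 := by
  have h := card_product_filter_lt (s := (univ : Finset (Fin N)))
  rw [univ_product_univ, card_univ, Fintype.card_fin] at h
  rw [h, Nat.cast_choose_two]

def wronskian (F F' : Fin N → ℂ) (p : Fin N × Fin N) : ℂ := F' p.1 * F p.2 - F p.1 * F' p.2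

def oneAddNormSq (F : Fin N → ℂ) : ℝ := 1 + ∑ i, ‖F i‖ ^ 2

lemma one_le_oneAddNormSq (F : Fin N → ℂ) : 1 ≤ oneAddNormSq F :=
  le_add_of_nonneg_right (by positivity)

lemma oneAddNormSq_pos (F : Fin N → ℂ) : 0 < oneAddNormSq F :=
  one_pos.trans_le (one_le_oneAddNormSq F)

/-- `sphericalDeriv f z` as a function of the values `F i = f i z` and derivatives
`F' i = deriv (f i) z`. -/
def sphericalDerivOfJet (F F' : Fin N → ℂ) : ℝ :=
  √(∑ i, ‖F' i‖ ^ 2 + ∑ p ∈ ordPairs N, ‖wronskian F F' p‖ ^ 2) / (√π * oneAddNormSq F)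

lemma sphericalDeriv_eq_sphericalDerivOfJet (f : Fin N → ℂ → ℂ) (z : ℂ) :
    sphericalDeriv f z = sphericalDerivOfJet (f · z) (fun i => deriv (f i) z) :=
  rfl

lemma sphericalDerivOfJet_eq (F F' : Fin N → ℂ) :
    sphericalDerivOfJet F F' = √(∑ i, (‖F' i‖ / oneAddNormSq F) ^ 2 +
      ∑ p ∈ ordPairs N, (‖wronskian F F' p‖ / oneAddNormSq F) ^ 2) / √π := by
  simp only [sphericalDerivOfJet, div_pow, ← sum_div, ← add_div]
  rw [sqrt_div' _ (sq_nonneg _), sqrt_sq (oneAddNormSq_pos F).le, div_div, mul_comm]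

section Brody

variable {F F' : Fin N → ℂ}

lemma sqrt_sum_sq_le_of_sphericalDerivOfJet_le_one (h : sphericalDerivOfJet F F' ≤ 1) :
    √(∑ i, ‖F' i‖ ^ 2 + ∑ p ∈ ordPairs N, ‖wronskian F F' p‖ ^ 2) ≤ √π * oneAddNormSq F := by
  rwa [sphericalDerivOfJet, div_le_one (mul_pos (sqrt_pos.2 pi_pos) (oneAddNormSq_pos F))] at h

lemma norm_le_of_sphericalDerivOfJet_le_one (h : sphericalDerivOfJet F F' ≤ 1) (i : Fin N) :
    ‖F' i‖ ≤ √π * oneAddNormSq F := by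
  refine le_trans (le_sqrt_of_sq_le ?_) (sqrt_sum_sq_le_of_sphericalDerivOfJet_le_one h)
  exact le_add_of_le_of_nonneg (single_le_sum (fun j _ => sq_nonneg ‖F' j‖) (mem_univ i))
    (by positivity)

lemma norm_wronskian_le_of_sphericalDerivOfJet_le_one (h : sphericalDerivOfJet F F' ≤ 1)
    {p : Fin N × Fin N} (hp : p ∈ ordPairs N) :
    ‖wronskian F F' p‖ ≤ √π * oneAddNormSq F := by
  refine le_trans (le_sqrt_of_sq_le ?_) (sqrt_sum_sq_le_of_sphericalDerivOfJet_le_one h)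
  exact le_add_of_nonneg_of_le (by positivity)
    (single_le_sum (fun q _ => sq_nonneg ‖wronskian F F' q‖) hp)

end Brody

lemma norm_add_norm_le_sqrt_two_mul_oneAddNormSq (F : Fin N → ℂ) {i j : Fin N} (hij : i ≠ j) :
    ‖F i‖ + ‖F j‖ ≤ √2 * oneAddNormSq F := by
  have hpair : ‖F i‖ ^ 2 + ‖F j‖ ^ 2 ≤ ∑ k, ‖F k‖ ^ 2 := by
    rw [← sum_pair (f := fun k => ‖F k‖ ^ 2) hij]
    exact sum_le_sum_of_subset_of_nonneg (subset_univ _) fun k _ _ => sq_nonneg _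
  have hsq : (‖F i‖ + ‖F j‖) ^ 2 ≤ 2 * oneAddNormSq F ^ 2 := by
    unfold oneAddNormSq
    nlinarith [sq_nonneg (‖F i‖ - ‖F j‖), sq_nonneg (∑ k, ‖F k‖ ^ 2)]
  calc ‖F i‖ + ‖F j‖ ≤ √(2 * oneAddNormSq F ^ 2) := le_sqrt_of_sq_le hsq
    _ = √2 * oneAddNormSq F := by
      rw [sqrt_mul zero_le_two, sqrt_sq (oneAddNormSq_pos F).le]

lemma abs_oneAddNormSq_sub_le (F : Fin N → ℂ) {c : ℂ} {ε : ℝ} (hc : ‖c‖ ≤ ε)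
    (hε : N * ε ^ 2 ≤ 1) :
    |oneAddNormSq F - oneAddNormSq (F · + c)| ≤ 2 * √N * ε * oneAddNormSq (F · + c) := by
  have hnorm (i : Fin N) : |‖F i + c‖ - ‖F i‖| ≤ ε :=
    (abs_norm_sub_norm_le _ _).trans (by simpa using hc)
  have h := abs_sum_sq_sub_sum_sq_le (fun i => norm_nonneg (F i + c)) hnorm
    (by rwa [Fintype.card_fin])
  rw [Fintype.card_fin] at h
  rw [abs_sub_comm]
  simpa only [oneAddNormSq, add_sub_add_left_eq_sub] using h

lemma wronskian_add_sub_wronskian (F F' : Fin N → ℂ) (c c' : ℂ) (p : Fin N × Fin N) :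
    wronskian (F · + c) (F' · + c') p - wronskian F F' p =
      c * (F' p.1 - F' p.2) + c' * (F p.2 - F p.1) := by
  simp only [wronskian]
  ring

section Perturbation

variable {F F' : Fin N → ℂ} {c c' : ℂ} {a t M : ℝ}

lemma abs_norm_div_oneAddNormSq_add_sub_le (hS : sphericalDerivOfJet F F' ≤ 1) (ha : 0 ≤ a)
    (ht : t ≤ 1) (hc' : ‖c'‖ ≤ 3 * (a * t))
    (hM : |oneAddNormSq F - oneAddNormSq (F · + c)| ≤ M * oneAddNormSq (F · + c)) (i : Fin N) :
    |‖F' i + c'‖ / oneAddNormSq (F · + c) - ‖F' i‖ / oneAddNormSq F| ≤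
      3 * (a * t) + (√π + 3 * a) * M := by
  have hw := one_le_oneAddNormSq F
  have hdiff : |‖F' i + c'‖ - ‖F' i‖| ≤ 3 * (a * t) :=
    (abs_norm_sub_norm_le _ _).trans (by simpa using hc')
  refine abs_div_sub_div_le (oneAddNormSq_pos F) (oneAddNormSq_pos _) (norm_nonneg _)
    (hdiff.trans ?_) ?_ hM
  · nlinarith [(abs_nonneg _).trans hdiff]
  · have hF' := norm_le_of_sphericalDerivOfJet_le_one hS i
    have hat : a * t ≤ a := mul_le_of_le_one_right ha ht
    nlinarith [(abs_le.mp hdiff).2]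

lemma abs_norm_wronskian_div_oneAddNormSq_add_sub_le (hS : sphericalDerivOfJet F F' ≤ 1)
    (ha : 0 ≤ a) (ht : t ≤ 1) (hc : ‖c‖ ≤ a * t) (hc' : ‖c'‖ ≤ 3 * (a * t))
    (hM : |oneAddNormSq F - oneAddNormSq (F · + c)| ≤ M * oneAddNormSq (F · + c))
    {p : Fin N × Fin N} (hp : p ∈ ordPairs N) :
    |‖wronskian (F · + c) (F' · + c') p‖ / oneAddNormSq (F · + c) -
        ‖wronskian F F' p‖ / oneAddNormSq F| ≤
      (2 * √π + 3 * √2) * (a * t) + (√π + 2 * √π * a + 3 * √2 * a) * M := by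
  have hp' : p.1 ≠ p.2 := (mem_filter.mp hp).2.ne
  have hw := one_le_oneAddNormSq F
  have hF'₁ := norm_le_of_sphericalDerivOfJet_le_one hS p.1
  have hF'₂ := norm_le_of_sphericalDerivOfJet_le_one hS p.2
  have hF := norm_add_norm_le_sqrt_two_mul_oneAddNormSq F hp'.symm
  have hdiff : |‖wronskian (F · + c) (F' · + c') p‖ - ‖wronskian F F' p‖| ≤
      (2 * √π + 3 * √2) * (a * t) * oneAddNormSq F := by
    refine (abs_norm_sub_norm_le _ _).trans ?_
    rw [wronskian_add_sub_wronskian]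
    calc ‖c * (F' p.1 - F' p.2) + c' * (F p.2 - F p.1)‖
        ≤ ‖c‖ * (‖F' p.1‖ + ‖F' p.2‖) + ‖c'‖ * (‖F p.2‖ + ‖F p.1‖) := by
          refine (norm_add_le _ _).trans ?_
          rw [norm_mul, norm_mul]
          gcongr <;> exact norm_sub_le _ _
      _ ≤ (a * t) * (2 * (√π * oneAddNormSq F)) + 3 * (a * t) * (√2 * oneAddNormSq F) := by
          have ha₀ : 0 ≤ a * t := (norm_nonneg _).trans hc
          exact add_le_add (mul_le_mul hc (by linarith) (by positivity) ha₀)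
            (mul_le_mul hc' hF (by positivity) (by positivity))
      _ = (2 * √π + 3 * √2) * (a * t) * oneAddNormSq F := by ring
  refine abs_div_sub_div_le (oneAddNormSq_pos F) (oneAddNormSq_pos _) (norm_nonneg _) hdiff ?_ hM
  have hW := norm_wronskian_le_of_sphericalDerivOfJet_le_one hS hp
  have hat : a * t ≤ a := mul_le_of_le_one_right ha ht
  have hπ2 : 0 ≤ 2 * √π + 3 * √2 := by positivity
  nlinarith [(abs_le.mp hdiff).2, mul_le_mul_of_nonneg_left hat hπ2]

end Perturbation

lemma abs_sphericalDerivOfJet_sub_le (F F' G G' : Fin N → ℂ) {δ δ' : ℝ}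
    (hdiag : ∀ i, |‖G' i‖ / oneAddNormSq G - ‖F' i‖ / oneAddNormSq F| ≤ δ)
    (hwr : ∀ p ∈ ordPairs N,
      |‖wronskian G G' p‖ / oneAddNormSq G - ‖wronskian F F' p‖ / oneAddNormSq F| ≤ δ') :
    |sphericalDerivOfJet G G' - sphericalDerivOfJet F F'| ≤
      √(N * δ ^ 2 + N * (N - 1) / 2 * δ' ^ 2) / √π := by
  rw [sphericalDerivOfJet_eq, sphericalDerivOfJet_eq, ← sub_div, abs_div,
    abs_of_pos (sqrt_pos.2 pi_pos)]
  gcongr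
  have key := abs_sqrt_sum_sq_sub_sqrt_sum_sq_le (ι := Fin N ⊕ ordPairs N)
    (Sum.elim (fun i => ‖G' i‖ / oneAddNormSq G) (fun p => ‖wronskian G G' p‖ / oneAddNormSq G))
    (Sum.elim (fun i => ‖F' i‖ / oneAddNormSq F) (fun p => ‖wronskian F F' p‖ / oneAddNormSq F))
  simp only [Fintype.sum_sum_type, Sum.elim_inl, Sum.elim_inr] at key
  rw [← sum_coe_sort (ordPairs N), ← sum_coe_sort (ordPairs N)]
  refine key.trans (sqrt_le_sqrt (add_le_add ?_ ?_))
  · calc _ ≤ ∑ _i : Fin N, δ ^ 2 :=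
          sum_le_sum fun i _ => sq_le_sq' (abs_le.mp (hdiag i)).1 (abs_le.mp (hdiag i)).2
      _ = N * δ ^ 2 := by simp
  · calc _ ≤ ∑ _p : ordPairs N, δ' ^ 2 :=
          sum_le_sum fun p _ => sq_le_sq' (abs_le.mp (hwr p p.2)).1 (abs_le.mp (hwr p p.2)).2
      _ = N * (N - 1) / 2 * δ' ^ 2 := by
          rw [sum_const, card_univ, Fintype.card_coe, nsmul_eq_mul, card_ordPairs]

theorem abs_sphericalDerivOfJet_add_sub_le {F F' : Fin N → ℂ} {c c' : ℂ} {a t : ℝ}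
    (hS : sphericalDerivOfJet F F' ≤ 1) (ha : 0 ≤ a) (ht₀ : 0 ≤ t) (ht : t ≤ 1)
    (hc : ‖c‖ ≤ a * t) (hc' : ‖c'‖ ≤ 3 * (a * t)) (hN : N * (a * t) ^ 2 ≤ 1) :
    |sphericalDerivOfJet (F · + c) (F' · + c') - sphericalDerivOfJet F F'| ≤
      √(N * (4 * a * √(N + 1) * (√π + 3 * a) + 3 * a) ^ 2 + N * (N - 1) / 2 *
        (4 * a * √(N + 1) * (√π + 3 * a * √2 + 2 * a * √π) + 3 * a * √2 + 2 * a * √π) ^ 2) /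
        √π * t := by
  have hat : 0 ≤ a * t := mul_nonneg ha ht₀
  have hM : |oneAddNormSq F - oneAddNormSq (F · + c)| ≤
      4 * a * √(N + 1) * t * oneAddNormSq (F · + c) := by
    refine (abs_oneAddNormSq_sub_le F hc hN).trans
      (mul_le_mul_of_nonneg_right ?_ (oneAddNormSq_pos _).le)
    have hsqrt : √N ≤ √(N + 1) := sqrt_le_sqrt (by linarith)
    nlinarith [mul_le_mul_of_nonneg_left hsqrt hat, mul_nonneg (sqrt_nonneg (N + 1)) hat]
  have hscale (X Y : ℝ) : √(N * (X * t) ^ 2 + N * (N - 1) / 2 * (Y * t) ^ 2) / √π =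
      √(N * X ^ 2 + N * (N - 1) / 2 * Y ^ 2) / √π * t := by
    rw [show N * (X * t) ^ 2 + N * (N - 1) / 2 * (Y * t) ^ 2 =
      (N * X ^ 2 + N * (N - 1) / 2 * Y ^ 2) * t ^ 2 by ring, sqrt_mul' _ (sq_nonneg t),
      sqrt_sq ht₀]
    ring
  refine (abs_sphericalDerivOfJet_sub_le _ _ _ _
    (fun i => (abs_norm_div_oneAddNormSq_add_sub_le hS ha ht hc' hM i).trans_eq ?_)
    (fun p hp => (abs_norm_wronskian_div_oneAddNormSq_add_sub_le hS ha ht hc hc' hM hp).trans_eq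
      ?_)).trans_eq (hscale _ _) <;> ring

end

lemma hasDerivAt_const_div_pow (b : ℂ) (n : ℕ) {z : ℂ} (hz : z ≠ 0) :
    HasDerivAt (fun w => b / w ^ n) (-(n * b) / z ^ (n + 1)) z := by
  have h := ((hasDerivAt_pow n z).inv (pow_ne_zero n hz)).const_mul b
  simp only [Pi.inv_apply, ← div_eq_mul_inv] at h
  refine h.congr_deriv ?_
  rcases n with _ | n
  · simp
  · rw [Nat.add_sub_cancel]
    field_simp
    ring

lemma sphericalDeriv_add_eq_sphericalDerivOfJet {N : ℕ} {f : Fin N → ℂ → ℂ} {h : ℂ → ℂ}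
    {z h' : ℂ} (hf : ∀ i, DifferentiableAt ℂ (f i) z) (hh : HasDerivAt h h' z) :
    sphericalDeriv (fun i w => f i w + h w) z =
      sphericalDerivOfJet (fun i => f i z + h z) (fun i => deriv (f i) z + h') := by
  rw [sphericalDeriv_eq_sphericalDerivOfJet]
  congr 1
  exact funext fun i => ((hf i).hasDerivAt.add hh).deriv

lemma norm_div_pow_le_of_one_le (b : ℂ) {z : ℂ} (hz : 1 ≤ ‖z‖) {m n : ℕ} (hmn : m ≤ n) :
    ‖b / z ^ n‖ ≤ ‖b‖ / ‖z‖ ^ m := by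
  rw [norm_div, norm_pow]
  exact div_le_div_of_nonneg_left (norm_nonneg b) (by positivity) (pow_le_pow_right₀ hz hmn)

theorem stmt_12_general (N : ℕ) (a R₀ : ℝ) (ha : 0 < a) (hR₀ : 1 ≤ R₀)
    (h2 : (N : ℝ) * a ^ 2 / R₀ ^ 6 ≤ 1 / 2)
    (f : Fin N → ℂ → ℂ) (hf : ∀ i, Differentiable ℂ (f i))
    (hBrody : ∀ z : ℂ, sphericalDeriv f z ≤ 1)
    (g : Fin N → ℂ → ℂ) (hg : ∀ i, ∀ z : ℂ, g i z = f i z + (a : ℂ) / z ^ 3)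
    (Ka Ka' K : ℝ)
    (hKa : Ka = 4 * a * Real.sqrt ((N : ℝ) + 1) * (Real.sqrt Real.pi + 3 * a) + 3 * a)
    (hKa' : Ka' = 4 * a * Real.sqrt ((N : ℝ) + 1) *
        (Real.sqrt Real.pi + 3 * a * Real.sqrt 2 + 2 * a * Real.sqrt Real.pi) +
      3 * a * Real.sqrt 2 + 2 * a * Real.sqrt Real.pi)
    (hK : K = Real.sqrt ((N : ℝ) * Ka ^ 2 + ((N : ℝ) * ((N : ℝ) - 1) / 2) * Ka' ^ 2) /
      Real.sqrt Real.pi) :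
    ∀ z : ℂ, R₀ ≤ ‖z‖ →
      |sphericalDeriv g z - sphericalDeriv f z| ≤ K / ‖z‖ ^ 3 := by
  intro z hz
  obtain rfl : g = fun i w => f i w + (a : ℂ) / w ^ 3 := funext fun i => funext (hg i)
  subst hK hKa hKa'
  have hz1 : 1 ≤ ‖z‖ := hR₀.trans hz
  have hz0 : z ≠ 0 := norm_pos_iff.mp (one_pos.trans_le hz1)
  have hderiv : HasDerivAt (fun w => (a : ℂ) / w ^ 3) (-(3 * a) / z ^ 4) z := by
    simpa using hasDerivAt_const_div_pow (a : ℂ) 3 hz0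
  rw [sphericalDeriv_add_eq_sphericalDerivOfJet (fun i => (hf i).differentiableAt) hderiv,
    sphericalDeriv_eq_sphericalDerivOfJet, div_eq_mul_one_div _ (‖z‖ ^ 3)]
  set t := 1 / ‖z‖ ^ 3 with ht
  have hc : ‖(a : ℂ) / z ^ 3‖ ≤ a * t := by
    simp [abs_of_pos ha, ht, div_eq_mul_inv]
  have hc' : ‖-(3 * (a : ℂ)) / z ^ 4‖ ≤ 3 * (a * t) := by
    simpa [abs_of_pos ha, ht, div_eq_mul_inv, mul_assoc] using
      norm_div_pow_le_of_one_le (-(3 * (a : ℂ))) hz1 (by norm_num : 3 ≤ 4)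
  have hN : N * (a * t) ^ 2 ≤ 1 := by
    calc N * (a * t) ^ 2 = N * a ^ 2 / (‖z‖ ^ 3) ^ 2 := by rw [ht]; ring
      _ ≤ N * a ^ 2 / (R₀ ^ 3) ^ 2 := by gcongr
      _ ≤ 1 := by rw [← pow_mul]; linarith
  exact abs_sphericalDerivOfJet_add_sub_le (hBrody z) ha.le (by positivity)
    (div_le_one_of_le₀ (one_le_pow₀ hz1) (by positivity)) hc hc' hN

theorem stmt_12 (N : ℕ) (hN : 1 ≤ N) (a R₀ : ℝ) (ha : 0 < a) (hR₀ : 1 ≤ R₀)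
    (h1 : (N : ℝ) * a / R₀ ^ 3 ≤ 2) (h2 : (N : ℝ) * a ^ 2 / R₀ ^ 6 ≤ 1 / 2)
    (f : Fin N → ℂ → ℂ) (hf : ∀ i, Differentiable ℂ (f i))
    (hBrody : ∀ z : ℂ, sphericalDeriv f z ≤ 1)
    (g : Fin N → ℂ → ℂ) (hg : ∀ i, ∀ z : ℂ, g i z = f i z + (a : ℂ) / z ^ 3)
    (Ka Ka' K : ℝ)
    (hKa : Ka = 4 * a * Real.sqrt ((N : ℝ) + 1) * (Real.sqrt Real.pi + 3 * a) + 3 * a)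
    (hKa' : Ka' = 4 * a * Real.sqrt ((N : ℝ) + 1) *
        (Real.sqrt Real.pi + 3 * a * Real.sqrt 2 + 2 * a * Real.sqrt Real.pi) +
      3 * a * Real.sqrt 2 + 2 * a * Real.sqrt Real.pi)
    (hK : K = Real.sqrt ((N : ℝ) * Ka ^ 2 + ((N : ℝ) * ((N : ℝ) - 1) / 2) * Ka' ^ 2) /
      Real.sqrt Real.pi) :
    ∀ z : ℂ, R₀ ≤ ‖z‖ →
      |sphericalDeriv g z - sphericalDeriv f z| ≤ K / ‖z‖ ^ 3 :=
  stmt_12_general N a R₀ ha hR₀ h2 f hf hBrody g hg Ka Ka' K hKa hKa' hK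
end
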